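/- Let p and q be odd integers with p, q ≥ 5, and let G(p,q) be the presented group on generators A,B,C with relators A^p, B^q, (AB)^2, (BC)^2, (CA)^2, and C^{-1}(A^2B^2)^2. Then (ABC)^2 = 1 holds in G(p,q). -/
import Mathlib


/-- The relators of the group `G(p,q)` on generators `A = of 0`, `B = of 1`, `C = of 2`,
with relators `A^p, B^q, (AB)^2, (BC)^2, (CA)^2, C⁻¹(A²B²)²`. -/
def GRels (p q : ℤ) : Set (FreeGroup (Fin 3)) :=
  let A : FreeGroup (Fin 3) := FreeGroup.of 0
  let B : FreeGroup (Fin 3) := FreeGroup.of 1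
  let C : FreeGroup (Fin 3) := FreeGroup.of 2
  { A ^ p, B ^ q, (A * B) ^ 2, (B * C) ^ 2, (C * A) ^ 2, C⁻¹ * (A ^ 2 * B ^ 2) ^ 2 }

/-- Key group-theoretic fact: if `(a*b)^2 = 1` and `c = (a^2*b^2)^2`, then `(a*b*c)^2 = 1`.
Indeed, writing `t = ab` and `w = a²b²`, one has `t w t = w⁻¹` (a consequence of `t² = 1`),
hence `t c t = t w² t = w⁻² = c⁻¹`, so `(abc)² = (t c t) c = c⁻¹ c = 1`. -/
theorem key_abc {G : Type*} [Group G] (a b c : G)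
    (h1 : (a * b) ^ 2 = 1) (h4 : c = (a ^ 2 * b ^ 2) ^ 2) : (a * b * c) ^ 2 = 1 := by
  have hr : a * b * (a * b) = 1 := by rw [← h1]; rw [pow_two]
  have hw : c = (a * a * b * b) * (a * a * b * b) := by
    rw [h4, pow_two, pow_two, pow_two]; group
  -- F1 : (ab) w (ab) w = 1 where w = a²b²
  have F1 : (a * b) * (a * a * b * b) * (a * b) * (a * a * b * b) = 1 := by
    calc (a * b) * (a * a * b * b) * (a * b) * (a * a * b * b)
        = (a * b * a * a * b * a⁻¹) * (a * b * (a * b)) * (a * a * b * b) := by group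
      _ = (a * b * a) * (a * b * (a * b)) * b := by
          conv_lhs => rw [hr]
          group
      _ = a * b * (a * b) := by
          conv_lhs => rw [hr]
          group
      _ = 1 := hr
  have hE : (a * b) * (a * a * b * b) * (a * b) = (a * a * b * b)⁻¹ := by
    calc (a * b) * (a * a * b * b) * (a * b)
        = ((a * b) * (a * a * b * b) * (a * b) * (a * a * b * b)) * (a * a * b * b)⁻¹ := by
          group
      _ = (a * a * b * b)⁻¹ := by
          conv_lhs => rw [F1]
          group
  have hE2 : (a * b) * c * (a * b) = c⁻¹ := by
    rw [hw]
    calc (a * b) * ((a * a * b * b) * (a * a * b * b)) * (a * b)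
        = ((a * b) * (a * a * b * b) * (a * b)) * (a * b * (a * b))⁻¹ *
            ((a * b) * (a * a * b * b) * (a * b)) := by group
      _ = (a * a * b * b)⁻¹ * (1 : G)⁻¹ * (a * a * b * b)⁻¹ := by rw [hE, hr]
      _ = ((a * a * b * b) * (a * a * b * b))⁻¹ := by group
  calc (a * b * c) ^ 2 = ((a * b) * c * (a * b)) * c := by rw [pow_two]; group
    _ = c⁻¹ * c := by conv_lhs => rw [hE2]
    _ = 1 := by group

/-- In the group `G(p,q) = ⟨A,B,C ∣ Aᵖ, B^q, (AB)², (BC)², (CA)², C = (A²B²)²⟩`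
with `p,q` odd and `p,q ≥ 5`, the relation `(ABC)² = 1` holds. -/
theorem ABC_sq_eq_one (p q : ℤ) (hp : Odd p) (hq : Odd q)
    (hp5 : 5 ≤ p) (hq5 : 5 ≤ q) :
    ((PresentedGroup.of 0 * PresentedGroup.of 1 * PresentedGroup.of 2 :
      PresentedGroup (GRels p q))) ^ 2 = 1 := by
  set π := PresentedGroup.mk (GRels p q) with hπ
  have hone : ∀ r ∈ GRels p q, π r = 1 := fun r hr =>
    (QuotientGroup.eq_one_iff r).mpr (Subgroup.subset_normalClosure hr)
  set A : FreeGroup (Fin 3) := FreeGroup.of 0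
  set B : FreeGroup (Fin 3) := FreeGroup.of 1
  set C : FreeGroup (Fin 3) := FreeGroup.of 2
  have mem3 : (A * B) ^ 2 ∈ GRels p q := by
    simp [GRels, A, B]
  have mem6 : C⁻¹ * (A ^ 2 * B ^ 2) ^ 2 ∈ GRels p q := by
    simp [GRels, A, B, C]
  have h1 : (π A * π B) ^ 2 = 1 := by
    have := hone _ mem3
    simpa [map_mul, map_pow] using this
  have h4 : π C = (π A ^ 2 * π B ^ 2) ^ 2 := by
    have h := hone _ mem6
    simp only [map_mul, map_pow, map_inv] at h
    exact inv_mul_eq_one.mp h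
  exact key_abc (π A) (π B) (π C) h1 h4
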